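/- arXiv:2311.06982 — 7 statements merged into one kernel-verified Lean document; each statement's English description precedes it below -/
import Mathlib

section
/- Let Φ be an N×N real symmetric positive definite matrix and let K be an N×N real symmetric matrix. Then M = K·Φ⁻¹ admits a diagonalization M = V·D·V⁻¹ with D a real diagonal matrix and V an invertible real matrix satisfying cond(V) ≤ cond(Φ^{1/2}), where Φ^{1/2} is the symmetric positive definite square root of Φ. -/
open Matrix
open scoped Matrix.Norms.L2Operator

/-!
Write `Φ = S²` with `S = Φ^{1/2}`. Then `K Φ⁻¹ = S (S⁻¹ K S⁻¹) S⁻¹`, and `S⁻¹ K S⁻¹` is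
symmetric, so the spectral theorem gives `S⁻¹ K S⁻¹ = U D U⁻¹` with `U` orthogonal.
Hence `V = S U` diagonalizes `K Φ⁻¹`, and since multiplying by an orthogonal matrix
preserves the spectral norm, `cond(V) = cond(S)`.
-/

namespace Matrix

variable {n : Type*} [Fintype n] [DecidableEq n]

lemma mul_inv_mul_self_eq_conj {R : Type*} [CommRing R] {S : Matrix n n R} (hS : IsUnit S)
    (K : Matrix n n R) : K * (S * S)⁻¹ = S * (S⁻¹ * K * S⁻¹) * S⁻¹ := by
  have hdet : IsUnit S.det := (isUnit_iff_isUnit_det S).mp hS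
  simp only [mul_inv_rev, ← mul_assoc]
  rw [mul_nonsing_inv _ hdet, one_mul]

lemma IsHermitian.inv_mul_mul_inv {R : Type*} [CommRing R] [StarRing R] {S K : Matrix n n R}
    (hS : S.IsHermitian) (hK : K.IsHermitian) : (S⁻¹ * K * S⁻¹).IsHermitian := by
  simpa only [hS.inv.eq] using isHermitian_conjTranspose_mul_mul S⁻¹ hK

lemma inv_eq_star_of_mem_unitary {R : Type*} [CommRing R] [StarRing R] {U : Matrix n n R}
    (hU : U ∈ unitary (Matrix n n R)) : U⁻¹ = star U :=
  inv_eq_left_inv (Unitary.star_mul_self_of_mem hU)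

variable {𝕜 : Type*} [RCLike 𝕜]

lemma norm_mul_unitary_mul_norm_inv {U : Matrix n n 𝕜} (hU : U ∈ unitary (Matrix n n 𝕜))
    (S : Matrix n n 𝕜) : ‖S * U‖ * ‖(S * U)⁻¹‖ = ‖S‖ * ‖S⁻¹‖ := by
  rw [mul_inv_rev, inv_eq_star_of_mem_unitary hU, CStarRing.norm_mul_mem_unitary S hU,
    CStarRing.norm_mem_unitary_mul _ (Unitary.star_mem hU)]

theorem exists_diagonalization_mul_inv_sq_cond_eq {K S : Matrix n n 𝕜}
    (hK : K.IsHermitian) (hS : S.IsHermitian) (hSu : IsUnit S) :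
    ∃ (V : Matrix n n 𝕜) (d : n → ℝ), IsUnit V ∧
      K * (S * S)⁻¹ = V * diagonal (RCLike.ofReal ∘ d) * V⁻¹ ∧
      ‖V‖ * ‖V⁻¹‖ = ‖S‖ * ‖S⁻¹‖ := by
  obtain ⟨U, d, hspec⟩ : ∃ (U : unitary (Matrix n n 𝕜)) (d : n → ℝ),
      S⁻¹ * K * S⁻¹ =
        (U : Matrix n n 𝕜) * diagonal (RCLike.ofReal ∘ d) * star (U : Matrix n n 𝕜) :=
    ⟨_, _, (hS.inv_mul_mul_inv hK).spectral_theorem⟩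
  refine ⟨S * U, d, hSu.mul Unitary.isUnit_coe, ?_, norm_mul_unitary_mul_norm_inv U.2 S⟩
  rw [mul_inv_mul_self_eq_conj hSu, hspec, mul_inv_rev, inv_eq_star_of_mem_unitary U.2]
  simp only [mul_assoc]

end Matrix

theorem stmt2_general {N : ℕ} (Φ K : Matrix (Fin N) (Fin N) ℝ)
    (hK : K.IsHermitian)
    (S : Matrix (Fin N) (Fin N) ℝ) (hS : S.PosDef) (hSsq : S * S = Φ) :
    ∃ (V : Matrix (Fin N) (Fin N) ℝ) (d : Fin N → ℝ),
      IsUnit V ∧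
      K * Φ⁻¹ = V * Matrix.diagonal d * V⁻¹ ∧
      ‖V‖ * ‖V⁻¹‖ ≤ ‖S‖ * ‖S⁻¹‖ := by
  subst hSsq
  obtain ⟨V, d, hV, hdiag, hcond⟩ :=
    exists_diagonalization_mul_inv_sq_cond_eq hK hS.isHermitian hS.isUnit
  rw [RCLike.ofReal_real_eq_id, Function.id_comp] at hdiag
  exact ⟨V, d, hV, hdiag, hcond.le⟩

/-- If `Φ` is symmetric positive definite and `K` symmetric, then
`M = K·Φ⁻¹` admits a diagonalization `M = V·D·V⁻¹` with `D` real diagonal and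
`cond(V) ≤ cond(Φ^{1/2})`, where `Φ^{1/2}` is the symmetric positive definite
square root of `Φ` (here represented by any `S` with `S.PosDef` and `S * S = Φ`). -/
theorem stmt2 {N : ℕ} (Φ K : Matrix (Fin N) (Fin N) ℝ)
    (hΦ : Φ.PosDef) (hK : K.IsHermitian)
    (S : Matrix (Fin N) (Fin N) ℝ) (hS : S.PosDef) (hSsq : S * S = Φ) :
    ∃ (V : Matrix (Fin N) (Fin N) ℝ) (d : Fin N → ℝ),
      IsUnit V ∧
      K * Φ⁻¹ = V * Matrix.diagonal d * V⁻¹ ∧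
      ‖V‖ * ‖V⁻¹‖ ≤ ‖S‖ * ‖S⁻¹‖ :=
  stmt2_general Φ K hK S hS hSsq
end

section
/- (Matrix form of Proposition 3.1.) Let Φ be an N×N real symmetric positive definite matrix, let K be an N×N real symmetric matrix, and set M = K·Φ⁻¹. Then for every N×N real matrix Mᵉ and every complex eigenvalue λᵉ of Mᵉ, there exists a (real) eigenvalue λ of M such that |λ − λᵉ| ≤ cond(Φ^{1/2})·‖M − Mᵉ‖, where Φ^{1/2} is the symmetric positive definite square root of Φ. -/
open Matrix
open scoped Matrix.Norms.L2Operator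

/-- The multiset of complex eigenvalues (roots of the characteristic polynomial over `ℂ`)
of a real square matrix. -/
noncomputable def specC {n : ℕ} (A : Matrix (Fin n) (Fin n) ℝ) : Multiset ℂ :=
  ((A.map (algebraMap ℝ ℂ)).charpoly).roots

/-!
With `A = S⁻¹ K S⁻¹`, which is symmetric, `K Φ⁻¹ = S A S⁻¹`; and `S⁻¹ Mᵉ S` has the same
eigenvalues as `Mᵉ`. So it suffices to prove the Bauer–Fike bound for the Hermitian matrix `A`
and `B = S⁻¹ Mᵉ S`, then use `‖A - B‖ = ‖S⁻¹ (K Φ⁻¹ - Mᵉ) S‖ ≤ ‖S‖ ‖S⁻¹‖ ‖K Φ⁻¹ - Mᵉ‖`.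

Bauer–Fike: if `t` is an eigenvalue of `B` but not of `A`, the unitary diagonalisation of `A`
shows that `t - A` is a unit with `‖(t - A)⁻¹‖⁻¹ = min_i |t - λ_i|`, while `t - B` is not a
unit. Every element closer to a unit `x` than `‖x⁻¹‖⁻¹` is a unit (Neumann series), hence
`min_i |t - λ_i| ≤ ‖(t - B) - (t - A)‖ = ‖A - B‖`.
-/

theorem Units.inv_norm_inv_le_norm_sub {R : Type*} [NormedRing R] [HasSummableGeomSeries R]
    (x : Rˣ) {y : R} (hy : ¬IsUnit y) : ‖(↑x⁻¹ : R)‖⁻¹ ≤ ‖y - x‖ := by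
  by_contra! h
  exact hy (x.ofNearby y h).isUnit

namespace Matrix

variable {n 𝕜 : Type*} [Fintype n] [DecidableEq n] [RCLike 𝕜]

theorem IsHermitian.exists_unit_eq_algebraMap_sub {A : Matrix n n 𝕜} (hA : A.IsHermitian)
    {t : 𝕜} (ht : ∀ i, (hA.eigenvalues i : 𝕜) ≠ t) :
    ∃ x : (Matrix n n 𝕜)ˣ, (x : Matrix n n 𝕜) = algebraMap 𝕜 _ t - A ∧
      ‖(↑x⁻¹ : Matrix n n 𝕜)‖ = ‖fun i ↦ (t - hA.eigenvalues i)⁻¹‖ := by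
  set φ := Unitary.conjStarAlgAut 𝕜 (Matrix n n 𝕜) hA.eigenvectorUnitary
  set d : n → 𝕜 := fun i ↦ t - hA.eigenvalues i
  have hd : ∀ i, d i ≠ 0 := fun i ↦ sub_ne_zero.mpr (ht i).symm
  let D : (Matrix n n 𝕜)ˣ := ⟨diagonal d, diagonal d⁻¹, by simp [hd], by simp [hd]⟩
  refine ⟨Units.map φ.toMonoidHom D, ?_, ?_⟩
  · have hD : diagonal d = algebraMap 𝕜 _ t - diagonal (RCLike.ofReal ∘ hA.eigenvalues) := by
      ext i j
      by_cases h : i = j <;> simp [d, h, algebraMap_eq_diagonal]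
    show φ (diagonal d) = _
    rw [hD, map_sub, AlgHomClass.commutes, ← hA.spectral_theorem]
  · show ‖φ (diagonal d⁻¹)‖ = _
    rw [Unitary.conjStarAlgAut_apply, ← Unitary.coe_star, CStarRing.norm_mul_coe_unitary,
      CStarRing.norm_coe_unitary_mul, l2_opNorm_diagonal]
    rfl

theorem IsHermitian.exists_eigenvalue_norm_sub_le {A : Matrix n n 𝕜} (hA : A.IsHermitian)
    (B : Matrix n n 𝕜) {t : 𝕜} (ht : t ∈ spectrum 𝕜 B) :
    ∃ i, ‖(hA.eigenvalues i : 𝕜) - t‖ ≤ ‖A - B‖ := by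
  have : Nonempty n := by
    by_contra! hn
    simp [spectrum.of_subsingleton] at ht
  obtain ⟨i₀, -, hmin⟩ := Finset.univ.exists_min_image (fun i ↦ ‖(hA.eigenvalues i : 𝕜) - t‖)
    Finset.univ_nonempty
  refine ⟨i₀, ?_⟩
  rcases (norm_nonneg ((hA.eigenvalues i₀ : 𝕜) - t)).eq_or_lt with h0 | hpos
  · rw [← h0]; exact norm_nonneg _
  have hne : ∀ i, (hA.eigenvalues i : 𝕜) ≠ t := fun i h ↦
    hpos.not_ge (by simpa [h] using hmin i (Finset.mem_univ i))
  obtain ⟨x, hx, hxinv⟩ := hA.exists_unit_eq_algebraMap_sub hne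
  have hinv : ‖(↑x⁻¹ : Matrix n n 𝕜)‖ ≤ ‖(hA.eigenvalues i₀ : 𝕜) - t‖⁻¹ := by
    rw [hxinv]
    refine pi_norm_le_iff_of_nonneg (by positivity) |>.mpr fun i ↦ ?_
    rw [norm_inv, norm_sub_rev]
    exact inv_anti₀ hpos (hmin i (Finset.mem_univ i))
  calc ‖(hA.eigenvalues i₀ : 𝕜) - t‖ ≤ ‖(↑x⁻¹ : Matrix n n 𝕜)‖⁻¹ :=
        le_inv_comm₀ hpos x⁻¹.norm_pos |>.mpr hinv
    _ ≤ ‖(algebraMap 𝕜 _ t - B) - x‖ := x.inv_norm_inv_le_norm_sub (spectrum.mem_iff.mp ht)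
    _ = ‖A - B‖ := by rw [hx]; congr 1; abel

end Matrix

theorem EuclideanSpace.norm_sq_eq_norm_re_sq_add_norm_im_sq {n : Type*} [Fintype n]
    (x : EuclideanSpace ℂ n) :
    ‖x‖ ^ 2 = ‖WithLp.toLp 2 (fun i ↦ (x i).re)‖ ^ 2 + ‖WithLp.toLp 2 (fun i ↦ (x i).im)‖ ^ 2 := by
  simp only [EuclideanSpace.norm_sq_eq, ← Finset.sum_add_distrib, Complex.sq_norm,
    Complex.normSq_apply, Real.norm_eq_abs, sq_abs]
  simp [sq]

theorem Matrix.l2_opNorm_map_ofReal_le {m n : Type*} [Fintype m] [Fintype n] [DecidableEq n]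
    (C : Matrix m n ℝ) : ‖C.map (algebraMap ℝ ℂ)‖ ≤ ‖C‖ := by
  rw [l2_opNorm_def]
  refine ContinuousLinearMap.opNorm_le_bound _ (norm_nonneg _) fun x ↦ ?_
  set xr : EuclideanSpace ℝ n := WithLp.toLp 2 fun i ↦ (x i).re
  set xi : EuclideanSpace ℝ n := WithLp.toLp 2 fun i ↦ (x i).im
  have hre : (fun i ↦ ((C.map (algebraMap ℝ ℂ) *ᵥ x.ofLp) i).re) = C *ᵥ xr.ofLp := by
    ext i; simp [mulVec, dotProduct, Complex.re_sum, xr]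
  have him : (fun i ↦ ((C.map (algebraMap ℝ ℂ) *ᵥ x.ofLp) i).im) = C *ᵥ xi.ofLp := by
    ext i; simp [mulVec, dotProduct, Complex.im_sum, xi]
  refine (pow_le_pow_iff_left₀ (norm_nonneg _) (by positivity) two_ne_zero).mp ?_
  rw [EuclideanSpace.norm_sq_eq_norm_re_sq_add_norm_im_sq, mul_pow,
    EuclideanSpace.norm_sq_eq_norm_re_sq_add_norm_im_sq x, mul_add, ← mul_pow, ← mul_pow]
  simp only [LinearEquiv.trans_apply, LinearMap.coe_toContinuousLinearMap', toLpLin_apply,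
    WithLp.ofLp_toLp]
  rw [hre, him]
  gcongr
  · exact C.l2_opNorm_mulVec xr
  · exact C.l2_opNorm_mulVec xi

section specC

variable {n : ℕ}

theorem specC_inv_mul_mul {S : Matrix (Fin n) (Fin n) ℝ} (hS : IsUnit S)
    (X : Matrix (Fin n) (Fin n) ℝ) : specC (S⁻¹ * X * S) = specC X := by
  have hmap : S.map (algebraMap ℝ ℂ) * S⁻¹.map (algebraMap ℝ ℂ) = 1 := by
    rw [← Matrix.map_mul, mul_nonsing_inv S ((isUnit_iff_isUnit_det S).mp hS),
      Matrix.map_one _ (map_zero _) (map_one _)]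
  rw [specC, specC, Matrix.map_mul, Matrix.map_mul, charpoly_mul_comm, ← mul_assoc, hmap,
    one_mul]

theorem mem_spectrum_of_mem_specC {A : Matrix (Fin n) (Fin n) ℝ} {t : ℂ} (ht : t ∈ specC A) :
    t ∈ spectrum ℂ (A.map (algebraMap ℝ ℂ)) :=
  mem_spectrum_of_isRoot_charpoly (Polynomial.isRoot_of_mem_roots ht)

theorem Matrix.IsHermitian.eigenvalues_mem_specC {A : Matrix (Fin n) (Fin n) ℝ}
    (hA : (A.map (algebraMap ℝ ℂ)).IsHermitian) (i : Fin n) :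
    (hA.eigenvalues i : ℂ) ∈ specC A := by
  rw [specC, hA.roots_charpoly_eq_eigenvalues]
  simp

end specC

theorem stmt3_general {N : ℕ} (Φ K : Matrix (Fin N) (Fin N) ℝ)
    (hK : K.IsHermitian)
    (S : Matrix (Fin N) (Fin N) ℝ) (hS : S.PosDef) (hSsq : S * S = Φ)
    (Mε : Matrix (Fin N) (Fin N) ℝ) (lamε : ℂ) (hlamε : lamε ∈ specC Mε) :
    ∃ lam ∈ specC (K * Φ⁻¹), lam.im = 0 ∧
      ‖lam - lamε‖ ≤ (‖S‖ * ‖S⁻¹‖) * ‖K * Φ⁻¹ - Mε‖ := by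
  have hSu : IsUnit S := hS.isUnit
  have hSinv : S⁻¹ * S = 1 := nonsing_inv_mul S ((isUnit_iff_isUnit_det S).mp hSu)
  set A := S⁻¹ * K * S⁻¹
  have hMA : S⁻¹ * (K * Φ⁻¹) * S = A := by
    rw [← hSsq, Matrix.mul_inv_rev]
    simp only [A, mul_assoc, hSinv, mul_one]
  have hA : A.IsHermitian := by
    simp only [IsHermitian, A, conjTranspose_mul, hS.1.inv.eq, hK.eq, mul_assoc]
  have hAc : (A.map (algebraMap ℝ ℂ)).IsHermitian :=
    hA.map _ fun x ↦ (Complex.conj_ofReal x).symm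
  obtain ⟨i, hi⟩ := hAc.exists_eigenvalue_norm_sub_le ((S⁻¹ * Mε * S).map (algebraMap ℝ ℂ))
    (mem_spectrum_of_mem_specC (by rwa [specC_inv_mul_mul hSu]))
  refine ⟨_, ?_, Complex.ofReal_im _, hi.trans ?_⟩
  · rw [← specC_inv_mul_mul hSu, hMA]
    exact hAc.eigenvalues_mem_specC i
  calc ‖A.map (algebraMap ℝ ℂ) - (S⁻¹ * Mε * S).map (algebraMap ℝ ℂ)‖
      = ‖(S⁻¹ * (K * Φ⁻¹ - Mε) * S).map (algebraMap ℝ ℂ)‖ := by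
        rw [← hMA, ← Matrix.map_sub _ (map_sub _), mul_sub, sub_mul]
    _ ≤ ‖S⁻¹ * (K * Φ⁻¹ - Mε) * S‖ := l2_opNorm_map_ofReal_le _
    _ ≤ ‖S⁻¹‖ * ‖K * Φ⁻¹ - Mε‖ * ‖S‖ := norm_mul₃_le
    _ = ‖S‖ * ‖S⁻¹‖ * ‖K * Φ⁻¹ - Mε‖ := by ring

/-- matrix form of Proposition 3.1, Bauer–Fike for the PD case:
with `Φ` symmetric positive definite, `K` symmetric, and `M = K·Φ⁻¹`, for every real
matrix `Mᵉ` and every complex eigenvalue `λᵉ` of `Mᵉ` there is a (real) eigenvalue `λ`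
of `M` with `|λ − λᵉ| ≤ cond(Φ^{1/2})·‖M − Mᵉ‖`, where `Φ^{1/2}` is the symmetric
positive definite square root of `Φ` (represented by any `S` with `S.PosDef`, `S*S = Φ`). -/
theorem stmt3 {N : ℕ} (Φ K : Matrix (Fin N) (Fin N) ℝ)
    (hΦ : Φ.PosDef) (hK : K.IsHermitian)
    (S : Matrix (Fin N) (Fin N) ℝ) (hS : S.PosDef) (hSsq : S * S = Φ)
    (Mε : Matrix (Fin N) (Fin N) ℝ) (lamε : ℂ) (hlamε : lamε ∈ specC Mε) :
    ∃ lam ∈ specC (K * Φ⁻¹), lam.im = 0 ∧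
      ‖lam - lamε‖ ≤ (‖S‖ * ‖S⁻¹‖) * ‖K * Φ⁻¹ - Mε‖ :=
  stmt3_general Φ K hK S hS hSsq Mε lamε hlamε
end

section
/- Let N ≥ M, let P be an N×M real matrix with PᵀP invertible, let P† = (PᵀP)⁻¹Pᵀ and Q = I_N − P·P†. Let W be an N×(N−M) real matrix with WᵀW = I_{N−M}, PᵀW = 0, and W·Wᵀ = Q. Let Φ be an N×N real symmetric matrix such that WᵀΦW is positive definite. Define A = W·(WᵀΦW)⁻¹·Wᵀ and B = P†·(I_N − Φ·A). Then: (i) Φ·A + P·B = I_N and Pᵀ·A = 0 (so (A,B) solves the saddle-point system); (ii) A = Q·A = A·Q = Q·A·Q; and (iii) A is symmetric positive semidefinite. -/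
/-!
With `S = WᵀΦW`, the columns of `W` are orthonormal and span the range of `Q = WWᵀ = I − PP†`,
so `A = WS⁻¹Wᵀ` is a sandwich between `W` and `Wᵀ`: multiplying by `Q` on either side leaves it
unchanged, and `Q·Φ·A = W(WᵀΦW)S⁻¹Wᵀ = Q`. Since `PP† = I − Q`, the saddle-point identity
`ΦA + PP†(I − ΦA) = I` then reduces to the ring identity `x + (1 − q)(1 − x) = 1` whenever
`q x = q`. Positive semidefiniteness comes from `S⁻¹` being positive definite.
-/

open Matrix

theorem add_one_sub_mul_one_sub_eq_one {R : Type*} [Ring R] {q x : R} (h : q * x = q) :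
    x + (1 - q) * (1 - x) = 1 := by
  rw [sub_mul, one_mul, mul_sub, mul_one, h]
  abel

namespace Matrix

section Sandwich

variable {m n R : Type*} [Fintype m] [Fintype n] [DecidableEq n] [CommRing R]
  {W : Matrix m n R}

theorem mul_transpose_mul_sandwich (hW : Wᵀ * W = 1) (X : Matrix n n R) :
    W * Wᵀ * (W * X * Wᵀ) = W * X * Wᵀ := by
  simp only [Matrix.mul_assoc]
  rw [← Matrix.mul_assoc Wᵀ W, hW, Matrix.one_mul]

theorem sandwich_mul_mul_transpose (hW : Wᵀ * W = 1) (X : Matrix n n R) :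
    W * X * Wᵀ * (W * Wᵀ) = W * X * Wᵀ := by
  rw [← Matrix.mul_assoc, Matrix.mul_assoc _ Wᵀ W, hW, Matrix.mul_one]

theorem mul_transpose_mul_mul_sandwich_inv (Φ : Matrix m m R) (hS : IsUnit (Wᵀ * Φ * W).det) :
    W * Wᵀ * (Φ * (W * (Wᵀ * Φ * W)⁻¹ * Wᵀ)) = W * Wᵀ := by
  calc W * Wᵀ * (Φ * (W * (Wᵀ * Φ * W)⁻¹ * Wᵀ))
      = W * ((Wᵀ * Φ * W) * (Wᵀ * Φ * W)⁻¹) * Wᵀ := by simp only [Matrix.mul_assoc]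
    _ = W * Wᵀ := by rw [mul_nonsing_inv _ hS, Matrix.mul_one]

end Sandwich

theorem PosDef.posSemidef_sandwich_inv {m n : Type*} [Fintype m] [Fintype n] [DecidableEq n]
    {S : Matrix n n ℝ} (hS : S.PosDef) (W : Matrix m n ℝ) : (W * S⁻¹ * Wᵀ).PosSemidef := by
  simpa [conjTranspose_eq_transpose_of_trivial] using
    hS.inv.posSemidef.mul_mul_conjTranspose_same W

end Matrix

theorem stmt4_general {N M : ℕ}
    (P : Matrix (Fin N) (Fin M) ℝ)
    (W : Matrix (Fin N) (Fin (N - M)) ℝ)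
    (hWo : Wᵀ * W = (1 : Matrix (Fin (N - M)) (Fin (N - M)) ℝ))
    (hPW : Pᵀ * W = 0)
    (hWQ : W * Wᵀ = (1 : Matrix (Fin N) (Fin N) ℝ) - P * ((Pᵀ * P)⁻¹ * Pᵀ))
    (Φ : Matrix (Fin N) (Fin N) ℝ)
    (hWΦW : (Wᵀ * Φ * W).PosDef) :
    -- notation: P† = (PᵀP)⁻¹Pᵀ, Q = I − P·P†, A = W·(WᵀΦW)⁻¹·Wᵀ, B = P†·(I − Φ·A)
    Φ * (W * (Wᵀ * Φ * W)⁻¹ * Wᵀ) +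
        P * (((Pᵀ * P)⁻¹ * Pᵀ) * ((1 : Matrix (Fin N) (Fin N) ℝ) -
          Φ * (W * (Wᵀ * Φ * W)⁻¹ * Wᵀ))) = (1 : Matrix (Fin N) (Fin N) ℝ) ∧
    Pᵀ * (W * (Wᵀ * Φ * W)⁻¹ * Wᵀ) = 0 ∧
    (W * (Wᵀ * Φ * W)⁻¹ * Wᵀ) =
      ((1 : Matrix (Fin N) (Fin N) ℝ) - P * ((Pᵀ * P)⁻¹ * Pᵀ)) *
        (W * (Wᵀ * Φ * W)⁻¹ * Wᵀ) ∧
    (W * (Wᵀ * Φ * W)⁻¹ * Wᵀ) =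
      (W * (Wᵀ * Φ * W)⁻¹ * Wᵀ) *
        ((1 : Matrix (Fin N) (Fin N) ℝ) - P * ((Pᵀ * P)⁻¹ * Pᵀ)) ∧
    (W * (Wᵀ * Φ * W)⁻¹ * Wᵀ) =
      ((1 : Matrix (Fin N) (Fin N) ℝ) - P * ((Pᵀ * P)⁻¹ * Pᵀ)) *
        (W * (Wᵀ * Φ * W)⁻¹ * Wᵀ) *
        ((1 : Matrix (Fin N) (Fin N) ℝ) - P * ((Pᵀ * P)⁻¹ * Pᵀ)) ∧
    (W * (Wᵀ * Φ * W)⁻¹ * Wᵀ).PosSemidef := by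
  have hPP : P * ((Pᵀ * P)⁻¹ * Pᵀ) = 1 - W * Wᵀ := by rw [hWQ, sub_sub_cancel]
  rw [← hWQ, ← Matrix.mul_assoc P, hPP]
  set A := W * (Wᵀ * Φ * W)⁻¹ * Wᵀ
  have hQA : W * Wᵀ * A = A := mul_transpose_mul_sandwich hWo _
  have hAQ : A * (W * Wᵀ) = A := sandwich_mul_mul_transpose hWo _
  refine ⟨add_one_sub_mul_one_sub_eq_one
      (mul_transpose_mul_mul_sandwich_inv Φ hWΦW.det_pos.ne'.isUnit), ?_, hQA.symm, hAQ.symm,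
    by rw [hQA, hAQ], hWΦW.posSemidef_sandwich_inv W⟩
  simp only [A, ← Matrix.mul_assoc, hPW, Matrix.zero_mul]

/-- properties of the matrices `A = W·(WᵀΦW)⁻¹·Wᵀ` and
`B = P†·(I − Φ·A)` arising from the saddle-point system. -/
theorem stmt4 {N M : ℕ} (hMN : M ≤ N)
    (P : Matrix (Fin N) (Fin M) ℝ) (hP : IsUnit (Pᵀ * P))
    (W : Matrix (Fin N) (Fin (N - M)) ℝ)
    (hWo : Wᵀ * W = (1 : Matrix (Fin (N - M)) (Fin (N - M)) ℝ))
    (hPW : Pᵀ * W = 0)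
    (hWQ : W * Wᵀ = (1 : Matrix (Fin N) (Fin N) ℝ) - P * ((Pᵀ * P)⁻¹ * Pᵀ))
    (Φ : Matrix (Fin N) (Fin N) ℝ) (hΦ : Φ.IsHermitian)
    (hWΦW : (Wᵀ * Φ * W).PosDef) :
    -- notation: P† = (PᵀP)⁻¹Pᵀ, Q = I − P·P†, A = W·(WᵀΦW)⁻¹·Wᵀ, B = P†·(I − Φ·A)
    Φ * (W * (Wᵀ * Φ * W)⁻¹ * Wᵀ) +
        P * (((Pᵀ * P)⁻¹ * Pᵀ) * ((1 : Matrix (Fin N) (Fin N) ℝ) -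
          Φ * (W * (Wᵀ * Φ * W)⁻¹ * Wᵀ))) = (1 : Matrix (Fin N) (Fin N) ℝ) ∧
    Pᵀ * (W * (Wᵀ * Φ * W)⁻¹ * Wᵀ) = 0 ∧
    (W * (Wᵀ * Φ * W)⁻¹ * Wᵀ) =
      ((1 : Matrix (Fin N) (Fin N) ℝ) - P * ((Pᵀ * P)⁻¹ * Pᵀ)) *
        (W * (Wᵀ * Φ * W)⁻¹ * Wᵀ) ∧
    (W * (Wᵀ * Φ * W)⁻¹ * Wᵀ) =
      (W * (Wᵀ * Φ * W)⁻¹ * Wᵀ) *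
        ((1 : Matrix (Fin N) (Fin N) ℝ) - P * ((Pᵀ * P)⁻¹ * Pᵀ)) ∧
    (W * (Wᵀ * Φ * W)⁻¹ * Wᵀ) =
      ((1 : Matrix (Fin N) (Fin N) ℝ) - P * ((Pᵀ * P)⁻¹ * Pᵀ)) *
        (W * (Wᵀ * Φ * W)⁻¹ * Wᵀ) *
        ((1 : Matrix (Fin N) (Fin N) ℝ) - P * ((Pᵀ * P)⁻¹ * Pᵀ)) ∧
    (W * (Wᵀ * Φ * W)⁻¹ * Wᵀ).PosSemidef :=
  stmt4_general P W hWo hPW hWQ Φ hWΦW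
end

section
/- (Matrix form of Lemma 4.1.) Let N > M, let P be an N×M real matrix with PᵀP invertible, P† = (PᵀP)⁻¹Pᵀ, Q = I_N − P·P†, and let W be an N×(N−M) real matrix with WᵀW = I_{N−M}, PᵀW = 0, and W·Wᵀ = Q. Let Φ be an N×N real symmetric matrix with WᵀΦW positive definite, let K be an N×N real symmetric matrix, and let Λ be an M×M real diagonal matrix. Define A = W·(WᵀΦW)⁻¹·Wᵀ, B = P†·(I_N − Φ·A), and M_X = K·A + P·Λ·B. Then there exist an N×(N−M) real matrix Z, an M×(N−M) real matrix R, and an (N−M)×(N−M) real diagonal matrix Θ such that the N×N matrix V = [P Z] (columns of P followed by columns of Z) is invertible and M_X = V · [[Λ, R],[0, Θ]] · V⁻¹, where [[Λ, R],[0, Θ]] denotes the block upper triangular matrix with these blocks. Consequently σ(M_X) equals the set of diagonal entries of Λ together with the diagonal entries of Θ. Moreover, if WᵀKW is positive semidefinite then every diagonal entry of Θ is nonnegative, and if WᵀKW is positive definite then every diagonal entry of Θ is strictly positive. -/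
/-!
`A` annihilates the columns of `P` and `B·P = I`, so `M_X·P = P·Λ`: the column space of `P`
is invariant and `M_X` acts on it as `Λ`. Since `W·Wᵀ + P·P† = I`, what remains is the
compression `Wᵀ·M_X·W = (WᵀKW)(WᵀΦW)⁻¹`, a symmetric matrix times a positive definite one.
Writing `(WᵀΦW)⁻¹ = GᵀG` with `G` invertible, it is similar to the symmetric matrix
`G(WᵀKW)Gᵀ`, hence diagonalizable with real eigenvalues `Θ`, which inherit (semi)definiteness
from `WᵀKW` because congruence preserves it. With `Y` the corresponding eigenvector matrix,
`Z = W·Y` completes `P` to a basis in which `M_X` is block upper triangular.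
-/

open Matrix

open Polynomial
open scoped ComplexOrder

section Diagonalization

variable {𝕜 n : Type*} [RCLike 𝕜] [Fintype n] [DecidableEq n]

lemma Matrix.IsHermitian.exists_unitary_mul_eq_mul_diagonal {H : Matrix n n 𝕜}
    (hH : H.IsHermitian) :
    ∃ U ∈ unitaryGroup n 𝕜, H * U = U * diagonal (RCLike.ofReal ∘ hH.eigenvalues) := by
  refine ⟨hH.eigenvectorUnitary, hH.eigenvectorUnitary.2, ?_⟩
  conv_lhs => arg 1; rw [hH.spectral_theorem, Unitary.conjStarAlgAut_apply]
  simp [Matrix.mul_assoc]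

open scoped MatrixOrder in
theorem Matrix.PosDef.exists_isUnit_mul_mul_eq_mul_diagonal {S C : Matrix n n 𝕜}
    (hS : S.PosDef) (hC : C.IsHermitian) :
    ∃ (Y : Matrix n n 𝕜) (θ : n → ℝ), IsUnit Y ∧
      C * S * Y = Y * diagonal (RCLike.ofReal ∘ θ) ∧
      (C.PosSemidef → ∀ j, 0 ≤ θ j) ∧ (C.PosDef → ∀ j, 0 < θ j) := by
  obtain ⟨G, rfl⟩ := CStarAlgebra.nonneg_iff_eq_star_mul_self.mp hS.posSemidef.nonneg
  have hG : IsUnit G := isUnit_of_mul_isUnit_right hS.isUnit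
  have hH : (G * C * star G).IsHermitian := isHermitian_mul_mul_conjTranspose G hC
  obtain ⟨U, hU, hHU⟩ := hH.exists_unitary_mul_eq_mul_diagonal
  set θ := hH.eigenvalues
  refine ⟨G⁻¹ * U, θ, (isUnit_nonsing_inv_iff.mpr hG).mul (Unitary.toUnits ⟨U, hU⟩).isUnit,
    ?_, fun hC₀ ↦ ?_, fun hC₀ ↦ ?_⟩
  · have hG' := (isUnit_iff_isUnit_det G).mp hG
    calc C * (star G * G) * (G⁻¹ * U) = G⁻¹ * (G * C * star G * U) := by
          simp [Matrix.mul_assoc, mul_nonsing_inv_cancel_left _ _ hG',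
            nonsing_inv_mul_cancel_left _ _ hG']
      _ = _ := by rw [hHU, Matrix.mul_assoc]
  · exact ((IsUnit.posSemidef_star_right_conjugate_iff hG).mpr hC₀).eigenvalues_nonneg
  · exact ((IsUnit.posDef_star_right_conjugate_iff hG).mpr hC₀).eigenvalues_pos

end Diagonalization

section BlockTriangular

variable {R : Type*} [CommRing R] {m k n : Type*}

lemma Matrix.charpoly_fromBlocks_diagonal_zero₂₁ [Fintype m] [Fintype k] [DecidableEq m]
    [DecidableEq k] (a : m → R) (b : k → R) (B : Matrix m k R) :
    (fromBlocks (diagonal a) B 0 (diagonal b)).charpoly = ∏ i, (X - C (Sum.elim a b i)) := by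
  rw [charpoly_fromBlocks_zero₂₁, charpoly_diagonal, charpoly_diagonal, Fintype.prod_sum_type]
  rfl

variable {P : Matrix n m R} {Z : Matrix n k R} (e : m ⊕ k ≃ n)

lemma Matrix.isUnit_reindex_fromCols [Fintype n] [DecidableEq m] [DecidableEq k]
    [DecidableEq n] {L₁ : Matrix m n R} {L₂ : Matrix k n R} (h₁₁ : L₁ * P = 1) (h₁₂ : L₁ * Z = 0)
    (h₂₁ : L₂ * P = 0) (h₂₂ : L₂ * Z = 1) :
    IsUnit (reindex (Equiv.refl n) e (fromCols P Z)) := by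
  refine (isUnit_iff_isUnit_det _).mpr <|
    isUnit_det_of_left_inverse (B := reindex e (Equiv.refl n) (fromRows L₁ L₂)) ?_
  rw [reindex_apply, reindex_apply, submatrix_mul_equiv, fromRows_mul_fromCols, h₁₁, h₁₂, h₂₁,
    h₂₂, fromBlocks_one, submatrix_one_equiv]

lemma Matrix.isUnit_reindex_fromCols_mul [Fintype k] [Fintype n] [DecidableEq m] [DecidableEq k]
    [DecidableEq n] {P' : Matrix m n R} {L : Matrix k n R} {W : Matrix n k R} {Y : Matrix k k R}
    (hP'P : P' * P = 1) (hP'W : P' * W = 0) (hLP : L * P = 0) (hLW : L * W = 1) (hY : IsUnit Y) :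
    IsUnit (reindex (Equiv.refl n) e (fromCols P (W * Y))) :=
  isUnit_reindex_fromCols e (L₂ := Y⁻¹ * L) hP'P
    (by rw [← Matrix.mul_assoc, hP'W, Matrix.zero_mul])
    (by rw [Matrix.mul_assoc, hLP, Matrix.mul_zero])
    (by rw [Matrix.mul_assoc, ← Matrix.mul_assoc L, hLW, Matrix.one_mul,
      nonsing_inv_mul _ ((isUnit_iff_isUnit_det Y).mp hY)])

lemma Matrix.mul_reindex_fromCols [Fintype m] [Fintype k] [Fintype n] {X : Matrix n n R}
    {Λ : Matrix m m R} {B : Matrix m k R} {Θ : Matrix k k R} (hP : X * P = P * Λ)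
    (hZ : X * Z = P * B + Z * Θ) :
    X * reindex (Equiv.refl n) e (fromCols P Z) =
      reindex (Equiv.refl n) e (fromCols P Z) * reindex e e (fromBlocks Λ B 0 Θ) := by
  have hX : X = X.submatrix id id := rfl
  simp only [reindex_apply, Equiv.refl_symm, Equiv.coe_refl]
  rw [hX, ← submatrix_mul _ _ _ _ _ Function.bijective_id, submatrix_mul_equiv, mul_fromCols,
    fromCols_mul_fromBlocks, hP, hZ]
  simp

end BlockTriangular

section DiffMatrix

variable {R : Type*} [CommRing R] {m k n : Type*} [Fintype m] [Fintype k] [Fintype n]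
  [DecidableEq n]

/-- The paper's `M_X = K·A + P·Λ·B` with `A = W·S·Wᵀ` and `B = P'·(I - Φ·A)`; the theorem takes
`S = (WᵀΦW)⁻¹` and `P' = P† = (PᵀP)⁻¹Pᵀ`. -/
def diffMatrix (K Φ : Matrix n n R) (P : Matrix n m R) (P' : Matrix m n R) (W : Matrix n k R)
    (S : Matrix k k R) (Λ : Matrix m m R) : Matrix n n R :=
  K * (W * S * Wᵀ) + P * Λ * (P' * (1 - Φ * (W * S * Wᵀ)))

variable {K Φ : Matrix n n R} {P : Matrix n m R} {P' : Matrix m n R} {W : Matrix n k R}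
  {S : Matrix k k R} {Λ : Matrix m m R}

lemma diffMatrix_mul_left [DecidableEq m] (hWP : Wᵀ * P = 0) (hP' : P' * P = 1) :
    diffMatrix K Φ P P' W S Λ * P = P * Λ := by
  have hAP : W * S * Wᵀ * P = 0 := by rw [Matrix.mul_assoc, hWP, Matrix.mul_zero]
  calc diffMatrix K Φ P P' W S Λ * P
      = K * (W * S * Wᵀ * P) + P * Λ * (P' * P - P' * Φ * (W * S * Wᵀ * P)) := by
        simp only [diffMatrix, Matrix.add_mul, Matrix.mul_sub, Matrix.sub_mul, Matrix.mul_one,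
          Matrix.mul_assoc]
    _ = P * Λ := by
        rw [hAP, hP', Matrix.mul_zero, Matrix.mul_zero, zero_add, sub_zero, Matrix.mul_one]

lemma diffMatrix_mul_mul [DecidableEq k] (hWW : Wᵀ * W = 1) (hWP : Wᵀ * P = 0)
    (hsplit : W * Wᵀ + P * P' = 1) {Y Θ : Matrix k k R} (hY : Wᵀ * K * W * S * Y = Y * Θ) :
    diffMatrix K Φ P P' W S Λ * (W * Y) =
      P * (P' * diffMatrix K Φ P P' W S Λ * W * Y) + W * Y * Θ := by
  set D := diffMatrix K Φ P P' W S Λ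
  have hcompr : Wᵀ * D * W = Wᵀ * K * W * S :=
    calc Wᵀ * D * W
        = Wᵀ * K * W * S * (Wᵀ * W) + Wᵀ * P * (Λ * (P' * (1 - Φ * (W * S * Wᵀ))) * W) := by
          simp only [D, diffMatrix, Matrix.mul_add, Matrix.add_mul, Matrix.mul_assoc]
      _ = Wᵀ * K * W * S := by rw [hWW, hWP, Matrix.mul_one, Matrix.zero_mul, add_zero]
  calc D * (W * Y) = (W * Wᵀ + P * P') * D * W * Y := by
        rw [hsplit, Matrix.one_mul, Matrix.mul_assoc]
    _ = W * (Wᵀ * K * W * S * Y) + P * (P' * D * W * Y) := by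
        rw [← hcompr]; simp only [Matrix.add_mul, Matrix.mul_assoc]
    _ = _ := by rw [hY, add_comm, Matrix.mul_assoc, Matrix.mul_assoc W]

end DiffMatrix

lemma mem_specC_iff_of_charpoly_eq_prod {n : ℕ} {ι : Type*} [Fintype ι]
    {A : Matrix (Fin n) (Fin n) ℝ} {d : ι → ℝ} (h : A.charpoly = ∏ i, (X - C (d i))) {μ : ℂ} :
    μ ∈ specC A ↔ ∃ i, μ = d i := by
  rw [specC, charpoly_map, h, Polynomial.map_prod]
  simp only [Polynomial.map_sub, map_X, map_C]
  rw [roots_prod _ _ (Finset.prod_ne_zero_iff.mpr fun i _ ↦ X_sub_C_ne_zero _)]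
  simp [eq_comm]

theorem stmt6_general {N M : ℕ} (hMN : M < N)
    (P : Matrix (Fin N) (Fin M) ℝ) (hP : IsUnit (Pᵀ * P))
    (W : Matrix (Fin N) (Fin (N - M)) ℝ)
    (hWo : Wᵀ * W = (1 : Matrix (Fin (N - M)) (Fin (N - M)) ℝ))
    (hPW : Pᵀ * W = 0)
    (hWQ : W * Wᵀ = (1 : Matrix (Fin N) (Fin N) ℝ) - P * ((Pᵀ * P)⁻¹ * Pᵀ))
    (Φ K : Matrix (Fin N) (Fin N) ℝ) (hK : K.IsHermitian)
    (hWΦW : (Wᵀ * Φ * W).PosDef)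
    (lam : Fin M → ℝ)
    -- A = W·(WᵀΦW)⁻¹·Wᵀ, B = P†·(I − Φ·A), M_X = K·A + P·Λ·B :
    (A MX : Matrix (Fin N) (Fin N) ℝ) (B : Matrix (Fin M) (Fin N) ℝ)
    (hA : A = W * (Wᵀ * Φ * W)⁻¹ * Wᵀ)
    (hB : B = ((Pᵀ * P)⁻¹ * Pᵀ) * ((1 : Matrix (Fin N) (Fin N) ℝ) - Φ * A))
    (hMX : MX = K * A + P * (Matrix.diagonal lam) * B) :
    ∃ (Z : Matrix (Fin N) (Fin (N - M)) ℝ)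
      (R : Matrix (Fin M) (Fin (N - M)) ℝ)
      (θ : Fin (N - M) → ℝ),
      IsUnit (Matrix.reindex (Equiv.refl (Fin N))
          (finSumFinEquiv.trans (finCongr (Nat.add_sub_cancel' hMN.le)))
          (Matrix.fromCols P Z)) ∧
      MX =
        (Matrix.reindex (Equiv.refl (Fin N))
            (finSumFinEquiv.trans (finCongr (Nat.add_sub_cancel' hMN.le)))
            (Matrix.fromCols P Z)) *
        (Matrix.reindex (finSumFinEquiv.trans (finCongr (Nat.add_sub_cancel' hMN.le)))
            (finSumFinEquiv.trans (finCongr (Nat.add_sub_cancel' hMN.le)))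
            (Matrix.fromBlocks (Matrix.diagonal lam) R 0 (Matrix.diagonal θ))) *
        (Matrix.reindex (Equiv.refl (Fin N))
            (finSumFinEquiv.trans (finCongr (Nat.add_sub_cancel' hMN.le)))
            (Matrix.fromCols P Z))⁻¹ ∧
      (∀ μ : ℂ, μ ∈ specC MX ↔ ((∃ i, μ = (lam i : ℂ)) ∨ (∃ j, μ = (θ j : ℂ)))) ∧
      ((Wᵀ * K * W).PosSemidef → ∀ j, 0 ≤ θ j) ∧
      ((Wᵀ * K * W).PosDef → ∀ j, 0 < θ j) := by
  set e := finSumFinEquiv.trans (finCongr (Nat.add_sub_cancel' hMN.le))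
  set P' := (Pᵀ * P)⁻¹ * Pᵀ
  have hP'P : P' * P = 1 := by
    rw [Matrix.mul_assoc, nonsing_inv_mul _ ((isUnit_iff_isUnit_det _).mp hP)]
  have hP'W : P' * W = 0 := by rw [Matrix.mul_assoc, hPW, Matrix.mul_zero]
  have hWP : Wᵀ * P = 0 := by rw [← transpose_transpose P, ← transpose_mul, hPW, transpose_zero]
  have hsplit : W * Wᵀ + P * P' = 1 := by rw [hWQ, sub_add_cancel]
  have hMX' : MX = diffMatrix K Φ P P' W (Wᵀ * Φ * W)⁻¹ (diagonal lam) := by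
    rw [hMX, hB, hA]; rfl
  obtain ⟨Y, θ, hY, hCSY, hθ₀, hθ⟩ := hWΦW.inv.exists_isUnit_mul_mul_eq_mul_diagonal
    (by simpa using isHermitian_conjTranspose_mul_mul W hK)
  simp only [RCLike.ofReal_real_eq_id, Function.id_comp] at hCSY
  have hMXP : MX * P = P * diagonal lam := hMX' ▸ diffMatrix_mul_left hWP hP'P
  have hMXZ : MX * (W * Y) = P * (P' * MX * W * Y) + W * Y * diagonal θ :=
    hMX' ▸ diffMatrix_mul_mul hWo hWP hsplit hCSY
  have hV : IsUnit (reindex (Equiv.refl _) e (fromCols P (W * Y))) :=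
    isUnit_reindex_fromCols_mul e hP'P hP'W hWP hWo hY
  set V := reindex (Equiv.refl _) e (fromCols P (W * Y))
  set T := reindex e e (fromBlocks (diagonal lam) (P' * MX * W * Y) 0 (diagonal θ))
  have hMXsim : MX = V * T * V⁻¹ := by
    rw [← mul_reindex_fromCols e hMXP hMXZ,
      mul_nonsing_inv_cancel_right _ _ ((isUnit_iff_isUnit_det _).mp hV)]
  refine ⟨W * Y, P' * MX * W * Y, θ, hV, hMXsim, fun μ ↦ ?_, hθ₀, hθ⟩
  rw [mem_specC_iff_of_charpoly_eq_prod (d := Sum.elim lam θ), Sum.exists]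
  · rfl
  · rw [hMXsim, ← hV.unit_spec, charpoly_units_conj, charpoly_reindex,
      charpoly_fromBlocks_diagonal_zero₂₁]

/-- matrix form of Lemma 4.1: the differentiation matrix
`M_X = K·A + P·Λ·B` is similar to a block upper triangular matrix with diagonal
principal blocks `Λ` and `Θ`, via `V = [P Z]`; consequently its spectrum is the set of
diagonal entries of `Λ` and `Θ`, and `Θ` is (strictly) positive when `WᵀKW` is. -/
theorem stmt6 {N M : ℕ} (hMN : M < N)
    (P : Matrix (Fin N) (Fin M) ℝ) (hP : IsUnit (Pᵀ * P))
    (W : Matrix (Fin N) (Fin (N - M)) ℝ)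
    (hWo : Wᵀ * W = (1 : Matrix (Fin (N - M)) (Fin (N - M)) ℝ))
    (hPW : Pᵀ * W = 0)
    (hWQ : W * Wᵀ = (1 : Matrix (Fin N) (Fin N) ℝ) - P * ((Pᵀ * P)⁻¹ * Pᵀ))
    (Φ K : Matrix (Fin N) (Fin N) ℝ) (hΦ : Φ.IsHermitian) (hK : K.IsHermitian)
    (hWΦW : (Wᵀ * Φ * W).PosDef)
    (lam : Fin M → ℝ)
    -- A = W·(WᵀΦW)⁻¹·Wᵀ, B = P†·(I − Φ·A), M_X = K·A + P·Λ·B :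
    (A MX : Matrix (Fin N) (Fin N) ℝ) (B : Matrix (Fin M) (Fin N) ℝ)
    (hA : A = W * (Wᵀ * Φ * W)⁻¹ * Wᵀ)
    (hB : B = ((Pᵀ * P)⁻¹ * Pᵀ) * ((1 : Matrix (Fin N) (Fin N) ℝ) - Φ * A))
    (hMX : MX = K * A + P * (Matrix.diagonal lam) * B) :
    ∃ (Z : Matrix (Fin N) (Fin (N - M)) ℝ)
      (R : Matrix (Fin M) (Fin (N - M)) ℝ)
      (θ : Fin (N - M) → ℝ),
      IsUnit (Matrix.reindex (Equiv.refl (Fin N))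
          (finSumFinEquiv.trans (finCongr (Nat.add_sub_cancel' hMN.le)))
          (Matrix.fromCols P Z)) ∧
      MX =
        (Matrix.reindex (Equiv.refl (Fin N))
            (finSumFinEquiv.trans (finCongr (Nat.add_sub_cancel' hMN.le)))
            (Matrix.fromCols P Z)) *
        (Matrix.reindex (finSumFinEquiv.trans (finCongr (Nat.add_sub_cancel' hMN.le)))
            (finSumFinEquiv.trans (finCongr (Nat.add_sub_cancel' hMN.le)))
            (Matrix.fromBlocks (Matrix.diagonal lam) R 0 (Matrix.diagonal θ))) *
        (Matrix.reindex (Equiv.refl (Fin N))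
            (finSumFinEquiv.trans (finCongr (Nat.add_sub_cancel' hMN.le)))
            (Matrix.fromCols P Z))⁻¹ ∧
      (∀ μ : ℂ, μ ∈ specC MX ↔ ((∃ i, μ = (lam i : ℂ)) ∨ (∃ j, μ = (θ j : ℂ)))) ∧
      ((Wᵀ * K * W).PosSemidef → ∀ j, 0 ≤ θ j) ∧
      ((Wᵀ * K * W).PosDef → ∀ j, 0 < θ j) :=
  stmt6_general hMN P hP W hWo hPW hWQ Φ K hK hWΦW lam A MX B hA hB hMX
end

section
/- (Abstract form of Proposition 4.2, a generalized Bauer–Fike theorem.) Let N > M ≥ 0 and suppose the N×N real matrix M_X has a factorization M_X = V · [[Λ, R],[0, Θ]] · V⁻¹, where V is an invertible N×N real matrix, Λ is an M×M real diagonal matrix, Θ is an (N−M)×(N−M) real diagonal matrix, and R is an M×(N−M) real matrix. Then for any N×N real matrix Mᵉ and any complex eigenvalue μ of Mᵉ, dist(μ, σ(M_X)) ≤ max( 2κ·‖M_X − Mᵉ‖, sqrt( 2κ·‖R‖·‖M_X − Mᵉ‖ ) ), where κ = cond(V) = ‖V‖·‖V⁻¹‖. -/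
open Matrix
open scoped Matrix.Norms.L2Operator

open scoped Ring

/-!
Bauer–Fike's argument, after complexification (which does not increase operator norms).
If `μ ∈ σ(Mᵉ)` and `μ ∉ σ(M_X)`, then `1 ≤ ‖(μ - M_X)⁻¹‖ ‖M_X - Mᵉ‖`: otherwise
`μ - Mᵉ = (μ - M_X) + (M_X - Mᵉ)` would be invertible by a Neumann series. Conjugating by `V`,
`μ - M_X` becomes the block triangular `[[D₁, -R], [0, D₂]]` with diagonal `D₁ = μ - Λ`,
`D₂ = μ - Θ`, whose inverse is `[[D₁⁻¹, D₁⁻¹ R D₂⁻¹], [0, D₂⁻¹]]`. If `d` is the distance from `μ`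
to the nearest eigenvalue, the entries of `D₁`, `D₂` have modulus at least `d`, so
`1 ≤ κ (1/d + ‖R‖/d²) ‖M_X - Mᵉ‖`, i.e. `d² ≤ κ‖M_X - Mᵉ‖ d + κ‖R‖‖M_X - Mᵉ‖`; one of the two
summands is then at least `d²/2`.
-/

namespace EuclideanSpace

variable {𝕜 : Type*} [RCLike 𝕜] {m n : Type*} [Fintype m] [Fintype n]

theorem norm_toLp_comp_equiv (e : m ≃ n) (v : n → 𝕜) :
    ‖WithLp.toLp 2 (v ∘ e)‖ = ‖WithLp.toLp 2 v‖ := by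
  simp only [EuclideanSpace.norm_eq, Function.comp_apply, e.sum_comp fun i => ‖v i‖ ^ 2]

theorem norm_toLp_sum_elim_sq (u : m → 𝕜) (v : n → 𝕜) :
    ‖WithLp.toLp 2 (Sum.elim u v)‖ ^ 2 = ‖WithLp.toLp 2 u‖ ^ 2 + ‖WithLp.toLp 2 v‖ ^ 2 := by
  simp only [EuclideanSpace.norm_sq_eq, Fintype.sum_sum_type, Sum.elim_inl, Sum.elim_inr]

theorem norm_toLp_sum_elim_zero (u : m → 𝕜) :
    ‖WithLp.toLp 2 (Sum.elim u (0 : n → 𝕜))‖ = ‖WithLp.toLp 2 u‖ := by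
  refine (pow_left_inj₀ (norm_nonneg _) (norm_nonneg _) two_ne_zero).1 ?_
  rw [norm_toLp_sum_elim_sq, WithLp.toLp_zero, norm_zero, sq 0, mul_zero, add_zero]

theorem norm_toLp_comp_inr_le (x : m ⊕ n → 𝕜) :
    ‖WithLp.toLp 2 (x ∘ Sum.inr)‖ ≤ ‖WithLp.toLp 2 x‖ := by
  refine (pow_le_pow_iff_left₀ (norm_nonneg _) (norm_nonneg _) two_ne_zero).1 ?_
  rw [← Sum.elim_comp_inl_inr x, norm_toLp_sum_elim_sq, Sum.elim_comp_inr]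
  exact le_add_of_nonneg_left (sq_nonneg _)

theorem norm_sq_eq_norm_re_sq_add_norm_im_sq_s7 (w : n → ℂ) :
    ‖WithLp.toLp 2 w‖ ^ 2
      = ‖WithLp.toLp 2 (fun i => (w i).re)‖ ^ 2 + ‖WithLp.toLp 2 (fun i => (w i).im)‖ ^ 2 := by
  simp only [EuclideanSpace.norm_sq_eq, ← Finset.sum_add_distrib, Complex.sq_norm,
    Complex.normSq_apply, Real.norm_eq_abs, sq_abs]
  ring_nf

end EuclideanSpace

namespace Pi

variable {𝕜 ι : Type*} [RCLike 𝕜] {v : ι → 𝕜} {d : ℝ}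

theorem isUnit_of_le_norm (hd : 0 < d) (hv : ∀ i, d ≤ ‖v i‖) : IsUnit v :=
  Pi.isUnit_iff.2 fun i => (norm_pos_iff.1 (hd.trans_le (hv i))).isUnit

theorem norm_ringInverse_le [Fintype ι] (hd : 0 < d) (hv : ∀ i, d ≤ ‖v i‖) : ‖v⁻¹ʳ‖ ≤ d⁻¹ := by
  refine (pi_norm_le_iff_of_nonneg (by positivity)).2 fun i => ?_
  have hi : v⁻¹ʳ i = (v i)⁻¹ :=
    eq_inv_of_mul_eq_one_right (congrFun (Ring.mul_inverse_cancel v (isUnit_of_le_norm hd hv)) i)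
  rw [hi, norm_inv]
  exact inv_anti₀ hd (hv i)

end Pi

namespace Matrix

theorem re_map_ofReal_mulVec {m n : Type*} [Fintype n] (A : Matrix m n ℝ) (x : n → ℂ) (i : m) :
    ((A.map (algebraMap ℝ ℂ) *ᵥ x) i).re = (A *ᵥ fun j => (x j).re) i := by
  simp [mulVec, dotProduct, Complex.re_sum]

theorem im_map_ofReal_mulVec {m n : Type*} [Fintype n] (A : Matrix m n ℝ) (x : n → ℂ) (i : m) :
    ((A.map (algebraMap ℝ ℂ) *ᵥ x) i).im = (A *ᵥ fun j => (x j).im) i := by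
  simp [mulVec, dotProduct, Complex.im_sum]

section L2OpNorm

variable {𝕜 : Type*} [RCLike 𝕜] {l m n o : Type*} [Fintype l] [Fintype m] [Fintype n] [Fintype o]

theorem norm_toLp_mulVec_le [DecidableEq n] (A : Matrix m n 𝕜) (x : n → 𝕜) :
    ‖WithLp.toLp 2 (A *ᵥ x)‖ ≤ ‖A‖ * ‖WithLp.toLp 2 x‖ :=
  l2_opNorm_mulVec A (WithLp.toLp 2 x)

theorem l2_opNorm_le_of_norm_mulVec_le [DecidableEq n] (A : Matrix m n 𝕜) {c : ℝ} (hc : 0 ≤ c)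
    (h : ∀ x : n → 𝕜, ‖WithLp.toLp 2 (A *ᵥ x)‖ ≤ c * ‖WithLp.toLp 2 x‖) : ‖A‖ ≤ c := by
  rw [l2_opNorm_def]
  exact ContinuousLinearMap.opNorm_le_bound _ hc fun x => h x.ofLp

theorem l2_opNorm_reindex_le [DecidableEq n] [DecidableEq o] (e₁ : m ≃ l) (e₂ : n ≃ o)
    (A : Matrix m n 𝕜) : ‖reindex e₁ e₂ A‖ ≤ ‖A‖ := by
  refine l2_opNorm_le_of_norm_mulVec_le _ (norm_nonneg _) fun x => ?_
  rw [reindex_apply, submatrix_mulVec_equiv, EuclideanSpace.norm_toLp_comp_equiv,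
    ← EuclideanSpace.norm_toLp_comp_equiv e₂ x, Equiv.symm_symm]
  exact norm_toLp_mulVec_le A _

theorem l2_opNorm_fromBlocks_zero_le [DecidableEq l] [DecidableEq m] (B : Matrix n m 𝕜) :
    ‖(fromBlocks 0 B 0 0 : Matrix (n ⊕ o) (l ⊕ m) 𝕜)‖ ≤ ‖B‖ := by
  refine l2_opNorm_le_of_norm_mulVec_le _ (norm_nonneg _) fun x => ?_
  have hmul : fromBlocks 0 B 0 0 *ᵥ x = Sum.elim (B *ᵥ (x ∘ Sum.inr)) (0 : o → 𝕜) := by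
    simp [fromBlocks_mulVec]
  rw [hmul, EuclideanSpace.norm_toLp_sum_elim_zero]
  exact (norm_toLp_mulVec_le B _).trans
    (mul_le_mul_of_nonneg_left (EuclideanSpace.norm_toLp_comp_inr_le x) (norm_nonneg _))

theorem l2_opNorm_map_ofReal_le_s7 [DecidableEq n] (A : Matrix m n ℝ) :
    ‖A.map (algebraMap ℝ ℂ)‖ ≤ ‖A‖ := by
  have hreal (y : n → ℝ) : ‖WithLp.toLp 2 (A *ᵥ y)‖ ^ 2 ≤ ‖A‖ ^ 2 * ‖WithLp.toLp 2 y‖ ^ 2 := by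
    rw [← mul_pow]
    gcongr
    exact norm_toLp_mulVec_le A y
  refine l2_opNorm_le_of_norm_mulVec_le _ (norm_nonneg _) fun x => ?_
  refine (pow_le_pow_iff_left₀ (norm_nonneg _) (by positivity) two_ne_zero).1 ?_
  simp only [EuclideanSpace.norm_sq_eq_norm_re_sq_add_norm_im_sq_s7, re_map_ofReal_mulVec,
    im_map_ofReal_mulVec, mul_pow, mul_add]
  exact add_le_add (hreal _) (hreal _)

theorem l2_opNorm_inv_fromBlocks_diagonal_le [DecidableEq m] [DecidableEq n] {a : m → 𝕜}
    {b : n → 𝕜} (B : Matrix m n 𝕜) {d : ℝ} (hd : 0 < d) (ha : ∀ i, d ≤ ‖a i‖)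
    (hb : ∀ j, d ≤ ‖b j‖) :
    ‖(fromBlocks (diagonal a) B 0 (diagonal b))⁻¹‖ ≤ d⁻¹ + ‖B‖ / d ^ 2 := by
  have hua := Pi.isUnit_of_le_norm hd ha
  have hub := Pi.isUnit_of_le_norm hd hb
  rw [inv_fromBlocks_zero₂₁_of_isUnit_iff _ _ _
    (iff_of_true (isUnit_diagonal.2 hua) (isUnit_diagonal.2 hub)), inv_diagonal, inv_diagonal]
  have hsplit : fromBlocks (diagonal a⁻¹ʳ) (-(diagonal a⁻¹ʳ * B * diagonal b⁻¹ʳ)) 0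
      (diagonal b⁻¹ʳ) = diagonal (Sum.elim a⁻¹ʳ b⁻¹ʳ)
        + fromBlocks 0 (-(diagonal a⁻¹ʳ * B * diagonal b⁻¹ʳ)) 0 0 := by
    rw [← fromBlocks_diagonal, fromBlocks_add]
    simp
  have hdiag : ‖diagonal (Sum.elim a⁻¹ʳ b⁻¹ʳ)‖ ≤ d⁻¹ := by
    rw [l2_opNorm_diagonal]
    refine (pi_norm_le_iff_of_nonneg (by positivity)).2 fun k => ?_
    cases k with
    | inl i => exact (norm_le_pi_norm _ i).trans (Pi.norm_ringInverse_le hd ha)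
    | inr j => exact (norm_le_pi_norm _ j).trans (Pi.norm_ringInverse_le hd hb)
  have hoff : ‖diagonal a⁻¹ʳ * B * diagonal b⁻¹ʳ‖ ≤ d⁻¹ * ‖B‖ * d⁻¹ := by
    refine (l2_opNorm_mul _ _).trans ?_
    gcongr
    · refine (l2_opNorm_mul _ _).trans ?_
      gcongr
      rw [l2_opNorm_diagonal]
      exact Pi.norm_ringInverse_le hd ha
    · rw [l2_opNorm_diagonal]
      exact Pi.norm_ringInverse_le hd hb
  calc _ ≤ d⁻¹ + d⁻¹ * ‖B‖ * d⁻¹ := by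
        rw [hsplit]
        refine (norm_add_le _ _).trans (add_le_add hdiag ?_)
        exact (l2_opNorm_fromBlocks_zero_le _).trans ((norm_neg _).trans_le hoff)
    _ = d⁻¹ + ‖B‖ / d ^ 2 := by ring

end L2OpNorm

end Matrix

theorem one_le_norm_resolvent_mul_norm_sub {R A : Type*} [CommRing R] [NormedRing A]
    [HasSummableGeomSeries A] [Algebra R A] {a b : A} {μ : R} (hb : μ ∈ spectrum R b)
    (ha : μ ∈ resolventSet R a) : 1 ≤ ‖resolvent a μ‖ * ‖a - b‖ := by
  rcases subsingleton_or_nontrivial A with hA | hA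
  · simp [spectrum.of_subsingleton] at hb
  by_contra! h
  set u := (spectrum.mem_resolventSet_iff.mp ha).unit
  rw [spectrum.resolvent_eq ha] at h
  have hsmall : ‖a - b‖ < ‖(↑u⁻¹ : A)‖⁻¹ := by
    rwa [← one_div, lt_div_iff₀' (Units.norm_pos _)]
  refine hb (spectrum.mem_resolventSet_iff.mpr ?_)
  simpa [u] using (u.add (a - b) hsmall).isUnit

namespace Matrix

section Resolvent

variable {K : Type*} [Field K] {m n ι : Type*} [Fintype m] [Fintype n] [Fintype ι]
  [DecidableEq m] [DecidableEq n] [DecidableEq ι]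

theorem resolvent_eq_inv (A : Matrix n n K) (μ : K) :
    resolvent A μ = (algebraMap K (Matrix n n K) μ - A)⁻¹ :=
  (nonsing_inv_eq_ringInverse _).symm

theorem resolvent_conj {V : Matrix n n K} (hV : IsUnit V) (A : Matrix n n K) (μ : K) :
    resolvent (V * A * V⁻¹) μ = V * resolvent A μ * V⁻¹ := by
  have hdet := (isUnit_iff_isUnit_det V).mp hV
  have hconj : algebraMap K _ μ - V * A * V⁻¹ = V * (algebraMap K _ μ - A) * V⁻¹ := by
    rw [mul_sub, sub_mul, ← Algebra.commutes, mul_nonsing_inv_cancel_right _ _ hdet]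
  rw [resolvent_eq_inv, resolvent_eq_inv, hconj, mul_inv_rev, mul_inv_rev,
    nonsing_inv_nonsing_inv _ hdet, mul_assoc]

theorem spectrum_conj {V : Matrix n n K} (hV : IsUnit V) (A : Matrix n n K) :
    spectrum K (V * A * V⁻¹) = spectrum K A := by
  simpa [coe_units_inv] using spectrum.units_conjugate (a := A) (u := hV.unit)

theorem charpoly_conj {V : Matrix n n K} (hV : IsUnit V) (A : Matrix n n K) :
    (V * A * V⁻¹).charpoly = A.charpoly :=
  charpoly_units_conj hV.unit A

theorem map_nonsing_inv {L : Type*} [Field L] (f : K →+* L) {V : Matrix n n K} (hV : IsUnit V) :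
    V⁻¹.map f = (V.map f)⁻¹ := by
  refine (inv_eq_right_inv ?_).symm
  rw [← Matrix.map_mul, mul_nonsing_inv _ ((isUnit_iff_isUnit_det V).mp hV),
    Matrix.map_one _ (map_zero f) (map_one f)]

theorem resolvent_reindex (e : m ≃ n) (A : Matrix m m K) (μ : K) :
    resolvent (reindex e e A) μ = reindex e e (resolvent A μ) := by
  have h := map_sub (reindexAlgEquiv K K e) (algebraMap K _ μ) A
  rw [AlgEquiv.commutes, coe_reindexAlgEquiv] at h
  rw [resolvent_eq_inv, resolvent_eq_inv, ← inv_reindex, h]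

theorem spectrum_reindex (e : m ≃ n) (A : Matrix m m K) :
    spectrum K (reindex e e A) = spectrum K A :=
  AlgEquiv.spectrum_eq (reindexAlgEquiv K K e) A

theorem algebraMap_sub_fromBlocks_diagonal (a : m → K) (b : n → K) (B : Matrix m n K) (μ : K) :
    algebraMap K _ μ - fromBlocks (diagonal a) B 0 (diagonal b)
      = fromBlocks (diagonal fun i => μ - a i) (-B) 0 (diagonal fun j => μ - b j) := by
  rw [algebraMap_eq_diagonal, Pi.algebraMap_def, ← Sum.elim_lam_const_lam_const,
    ← fromBlocks_diagonal, sub_eq_add_neg, fromBlocks_neg, fromBlocks_add]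
  simp [sub_eq_add_neg]

end Resolvent

theorem bauerFike_fromBlocks_diagonal {𝕜 : Type*} [RCLike 𝕜] {m n ι : Type*} [Fintype m]
    [Fintype n] [Fintype ι] [DecidableEq m] [DecidableEq n] [DecidableEq ι]
    {A E V : Matrix ι ι 𝕜} (hV : IsUnit V) (e : m ⊕ n ≃ ι) {a : m → 𝕜} {b : n → 𝕜}
    {B : Matrix m n 𝕜} (hA : A = V * reindex e e (fromBlocks (diagonal a) B 0 (diagonal b)) * V⁻¹)
    {μ : 𝕜} (hμ : μ ∈ spectrum 𝕜 E) {d : ℝ} (hd : 0 < d) (ha : ∀ i, d ≤ ‖μ - a i‖)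
    (hb : ∀ j, d ≤ ‖μ - b j‖) :
    1 ≤ ‖V‖ * ‖V⁻¹‖ * (d⁻¹ + ‖B‖ / d ^ 2) * ‖A - E‖ := by
  have hY := algebraMap_sub_fromBlocks_diagonal a b B μ
  have hμA : μ ∈ resolventSet 𝕜 A := by
    have hμT : μ ∈ resolventSet 𝕜 (fromBlocks (diagonal a) B 0 (diagonal b)) := by
      rw [spectrum.mem_resolventSet_iff, hY, isUnit_fromBlocks_zero₂₁, isUnit_diagonal,
        isUnit_diagonal]
      exact ⟨Pi.isUnit_of_le_norm hd ha, Pi.isUnit_of_le_norm hd hb⟩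
    rw [← Set.notMem_compl_iff, ← spectrum, hA, spectrum_conj hV, spectrum_reindex]
    exact Set.notMem_compl_iff.2 hμT
  have hres : ‖resolvent A μ‖ ≤ ‖V‖ * (d⁻¹ + ‖B‖ / d ^ 2) * ‖V⁻¹‖ := by
    rw [hA, resolvent_conj hV, resolvent_reindex, resolvent_eq_inv, hY]
    refine (l2_opNorm_mul _ _).trans (mul_le_mul_of_nonneg_right ?_ (norm_nonneg _))
    refine (l2_opNorm_mul _ _).trans (mul_le_mul_of_nonneg_left ?_ (norm_nonneg _))
    refine (l2_opNorm_reindex_le _ _ _).trans ?_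
    simpa using l2_opNorm_inv_fromBlocks_diagonal_le (-B) hd ha hb
  calc 1 ≤ ‖resolvent A μ‖ * ‖A - E‖ := one_le_norm_resolvent_mul_norm_sub hμ hμA
    _ ≤ ‖V‖ * (d⁻¹ + ‖B‖ / d ^ 2) * ‖V⁻¹‖ * ‖A - E‖ := by gcongr
    _ = ‖V‖ * ‖V⁻¹‖ * (d⁻¹ + ‖B‖ / d ^ 2) * ‖A - E‖ := by ring

theorem roots_charpoly_diagonal {K m : Type*} [CommRing K] [IsDomain K] [Fintype m]
    [DecidableEq m] (a : m → K) : (diagonal a).charpoly.roots = Finset.univ.val.map a := by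
  have h := Polynomial.roots_multiset_prod_X_sub_C (Finset.univ.val.map a)
  rw [Multiset.map_map] at h
  rwa [charpoly_diagonal, Finset.prod_eq_multiset_prod]

theorem roots_charpoly_fromBlocks_diagonal {K m n : Type*} [CommRing K] [IsDomain K] [Fintype m]
    [Fintype n] [DecidableEq m] [DecidableEq n] (a : m → K) (b : n → K) (B : Matrix m n K) :
    (fromBlocks (diagonal a) B 0 (diagonal b)).charpoly.roots
      = Finset.univ.val.map a + Finset.univ.val.map b := by
  rw [charpoly_fromBlocks_zero₂₁,
    Polynomial.roots_mul ((charpoly_monic _).mul (charpoly_monic _)).ne_zero,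
    roots_charpoly_diagonal, roots_charpoly_diagonal]

end Matrix

theorem le_max_of_one_le_mul_inv_add_div_sq {κ r e d : ℝ} (hd : 0 < d)
    (h : 1 ≤ κ * (d⁻¹ + r / d ^ 2) * e) : d ≤ max (2 * κ * e) √(2 * κ * r * e) := by
  by_contra! hlt
  rw [max_lt_iff, Real.sqrt_lt' hd] at hlt
  have h1 : κ * e / d < 1 / 2 := by rw [div_lt_iff₀ hd]; linarith
  have h2 : κ * r * e / d ^ 2 < 1 / 2 := by rw [div_lt_iff₀ (by positivity)]; linarith
  have : κ * (d⁻¹ + r / d ^ 2) * e = κ * e / d + κ * r * e / d ^ 2 := by ring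
  linarith

theorem mem_specC_iff {n : ℕ} (A : Matrix (Fin n) (Fin n) ℝ) (μ : ℂ) :
    μ ∈ specC A ↔ μ ∈ spectrum ℂ (A.map (algebraMap ℝ ℂ)) := by
  rw [specC, Polynomial.mem_roots (charpoly_monic _).ne_zero, mem_spectrum_iff_isRoot_charpoly]

/-- abstract form of Proposition 4.2, a generalized Bauer–Fike theorem:
if `M_X = V·[[Λ,R],[0,Θ]]·V⁻¹` with `Λ, Θ` diagonal, then for any `Mᵉ` and any complex
eigenvalue `μ` of `Mᵉ`, the distance from `μ` to `σ(M_X)` is at most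
`max(2κ‖M_X − Mᵉ‖, sqrt(2κ‖R‖‖M_X − Mᵉ‖))` with `κ = ‖V‖·‖V⁻¹‖`. -/
theorem stmt7 {N M : ℕ} (hMN : M < N)
    (MX V Mε : Matrix (Fin N) (Fin N) ℝ) (hV : IsUnit V)
    (lam : Fin M → ℝ) (θ : Fin (N - M) → ℝ)
    (R : Matrix (Fin M) (Fin (N - M)) ℝ)
    (hfact : MX =
      V *
      (Matrix.reindex (finSumFinEquiv.trans (finCongr (Nat.add_sub_cancel' hMN.le)))
          (finSumFinEquiv.trans (finCongr (Nat.add_sub_cancel' hMN.le)))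
          (Matrix.fromBlocks (Matrix.diagonal lam) R 0 (Matrix.diagonal θ))) *
      V⁻¹)
    (μ : ℂ) (hμ : μ ∈ specC Mε) :
    ∃ lam₀ ∈ specC MX,
      ‖μ - lam₀‖ ≤
        max (2 * (‖V‖ * ‖V⁻¹‖) * ‖MX - Mε‖)
          (Real.sqrt (2 * (‖V‖ * ‖V⁻¹‖) * ‖R‖ * ‖MX - Mε‖)) := by
  set e := finSumFinEquiv.trans (finCongr (Nat.add_sub_cancel' hMN.le))
  set c := algebraMap ℝ ℂ
  have hVc : IsUnit (V.map c) := hV.map c.mapMatrix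
  have hVinv : V⁻¹.map c = (V.map c)⁻¹ := map_nonsing_inv c hV
  have hMXc : MX.map c = V.map c
      * reindex e e (fromBlocks (diagonal (c ∘ lam)) (R.map c) 0 (diagonal (c ∘ θ)))
      * (V.map c)⁻¹ := by
    rw [← hVinv, hfact, Matrix.map_mul, Matrix.map_mul, reindex_apply, reindex_apply,
      ← submatrix_map, fromBlocks_map, diagonal_map (map_zero c), diagonal_map (map_zero c),
      Matrix.map_zero _ (map_zero c)]
    rfl
  have hspec : specC MX = Finset.univ.val.map (c ∘ lam) + Finset.univ.val.map (c ∘ θ) := by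
    rw [specC, hMXc, charpoly_conj hVc, charpoly_reindex, roots_charpoly_fromBlocks_diagonal]
  obtain ⟨lam₀, h₀, hmin⟩ := (specC MX).toFinset.exists_min_image (fun z => ‖μ - z‖)
    ⟨c (θ ⟨0, by omega⟩), by simp [hspec]⟩
  refine ⟨lam₀, Multiset.mem_toFinset.1 h₀, ?_⟩
  set d := ‖μ - lam₀‖
  have hnear : ∀ z ∈ specC MX, d ≤ ‖μ - z‖ := fun z hz => hmin z (Multiset.mem_toFinset.2 hz)
  rcases (norm_nonneg _ : 0 ≤ d).eq_or_lt with hd | hd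
  · exact hd.symm.le.trans (by positivity)
  refine le_max_of_one_le_mul_inv_add_div_sq hd ?_
  calc 1 ≤ ‖V.map c‖ * ‖(V.map c)⁻¹‖ * (d⁻¹ + ‖R.map c‖ / d ^ 2) * ‖MX.map c - Mε.map c‖ :=
        bauerFike_fromBlocks_diagonal hVc e hMXc ((mem_specC_iff _ _).1 hμ) hd
          (fun i => hnear _ (by simp [hspec])) (fun j => hnear _ (by simp [hspec]))
    _ ≤ _ := by
        rw [← hVinv, ← Matrix.map_sub _ (map_sub c)]
        gcongr <;> exact l2_opNorm_map_ofReal_le_s7 _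
end

section
/- Let Λ = diag(λ₁,…,λ_M) and Θ = diag(θ₁,…,θ_{N−M}) be real diagonal matrices with γ := min_j θ_j − max_i λ_i > 0, and let R be an M×(N−M) real matrix. Then the matrix X with entries X_{ij} = R_{ij}/(θ_j − λ_i) is the unique solution of the Sylvester equation −Λ·X + X·Θ = R, and its ℓ² operator norm satisfies ‖X‖ ≤ ‖R‖/γ. -/
/-!
Entrywise, `−ΛX + XΘ = R` reads `(θ_j − λ_i) X_{ij} = R_{ij}`, which gives the formula and its
uniqueness. For the norm bound, shift so that `λ_i ≤ a` and `θ_j ≥ a + γ`, and pick `s > 0` small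
enough that `A := I + s(Λ − a)` has entries in `[0, 1]`. The equation becomes the fixed-point
identity `X = (A X + s R) D` with `D := (I + s(Θ − a))⁻¹`, where `‖A‖ ≤ 1` and
`‖D‖ ≤ (1 + sγ)⁻¹`; hence `(1 + sγ)‖X‖ ≤ ‖X‖ + s‖R‖`, i.e. `γ‖X‖ ≤ ‖R‖`.
-/

open Matrix
open scoped Matrix.Norms.L2Operator

theorem exists_pos_mul_le_one {ι : Type*} [Finite ι] (f : ι → ℝ) : ∃ s > 0, ∀ i, s * f i ≤ 1 := by
  obtain ⟨B, hB⟩ := (Set.finite_range f).bddAbove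
  refine ⟨(1 + |B|)⁻¹, by positivity, fun i => ?_⟩
  rw [inv_mul_le_iff₀ (by positivity)]
  linarith [hB (Set.mem_range_self i), le_abs_self B]

namespace Matrix

variable {m n : Type*} [Fintype m] [Fintype n] [DecidableEq m] [DecidableEq n]

theorem l2_opNorm_diagonal_le {d : n → ℝ} {c : ℝ} (hc : 0 ≤ c) (hd : ∀ i, |d i| ≤ c) :
    ‖diagonal d‖ ≤ c := by
  rw [l2_opNorm_diagonal]
  exact (pi_norm_le_iff_of_nonneg hc).2 hd

theorem sylvester_diagonal_apply (lam : m → ℝ) (θ : n → ℝ) (X : Matrix m n ℝ) (i : m) (j : n) :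
    (-(diagonal lam * X) + X * diagonal θ) i j = (θ j - lam i) * X i j := by
  simp only [add_apply, neg_apply, diagonal_mul, mul_diagonal]
  ring

theorem sylvester_diagonal_eq_iff {lam : m → ℝ} {θ : n → ℝ} (hsep : ∀ i j, θ j - lam i ≠ 0)
    {X R : Matrix m n ℝ} :
    -(diagonal lam * X) + X * diagonal θ = R ↔ X = of fun i j => R i j / (θ j - lam i) := by
  simp only [← Matrix.ext_iff, sylvester_diagonal_apply, of_apply, eq_div_iff (hsep _ _)]
  exact forall_congr' fun i => forall_congr' fun j => by rw [mul_comm, eq_comm]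

theorem l2_opNorm_le_of_eq_mul_add_smul_mul {A : Matrix m m ℝ} {D : Matrix n n ℝ}
    {X R : Matrix m n ℝ} {s γ : ℝ} (hs : 0 < s) (hγ : 0 ≤ γ) (hA : ‖A‖ ≤ 1)
    (hD : ‖D‖ ≤ (1 + s * γ)⁻¹) (hX : X = (A * X + s • R) * D) :
    γ * ‖X‖ ≤ ‖R‖ := by
  have hsγ : 0 < 1 + s * γ := by positivity
  have hAX : ‖A * X‖ ≤ ‖X‖ :=
    (l2_opNorm_mul A X).trans (mul_le_of_le_one_left (norm_nonneg X) hA)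
  have hfix : ‖X‖ ≤ (‖X‖ + s * ‖R‖) * (1 + s * γ)⁻¹ :=
    calc ‖X‖ = ‖(A * X + s • R) * D‖ := by rw [← hX]
      _ ≤ ‖A * X + s • R‖ * ‖D‖ := l2_opNorm_mul _ _
      _ ≤ (‖A * X‖ + ‖s • R‖) * ‖D‖ := by gcongr; exact norm_add_le _ _
      _ ≤ (‖X‖ + s * ‖R‖) * (1 + s * γ)⁻¹ := by
        rw [norm_smul, Real.norm_of_nonneg hs.le]
        gcongr
  rw [le_mul_inv_iff₀ hsγ] at hfix
  nlinarith

theorem l2_opNorm_le_of_sylvester_diagonal {lam : m → ℝ} {θ : n → ℝ} {a γ : ℝ} (hγ : 0 < γ)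
    (hlam : ∀ i, lam i ≤ a) (hθ : ∀ j, a + γ ≤ θ j) {X R : Matrix m n ℝ}
    (hX : -(diagonal lam * X) + X * diagonal θ = R) :
    ‖X‖ ≤ ‖R‖ / γ := by
  obtain ⟨s, hs, hsl⟩ := exists_pos_mul_le_one fun i => a - lam i
  have hθs : ∀ j, 1 + s * γ ≤ 1 + s * (θ j - a) := fun j => by
    have := hθ j; gcongr; linarith
  have hA : ‖diagonal fun i => 1 + s * (lam i - a)‖ ≤ 1 := by
    refine l2_opNorm_diagonal_le zero_le_one fun i => abs_le.2 ⟨?_, ?_⟩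
    · linarith [hsl i]
    · nlinarith [hlam i]
  have hD : ‖diagonal fun j => (1 + s * (θ j - a))⁻¹‖ ≤ (1 + s * γ)⁻¹ := by
    refine l2_opNorm_diagonal_le (by positivity) fun j => ?_
    rw [abs_of_pos (inv_pos.2 ((by positivity : 0 < 1 + s * γ).trans_le (hθs j)))]
    exact inv_anti₀ (by positivity) (hθs j)
  have hfix : X = ((diagonal fun i => 1 + s * (lam i - a)) * X + s • R) *
      diagonal fun j => (1 + s * (θ j - a))⁻¹ := by
    ext i j
    have hden : 1 + s * (θ j - a) ≠ 0 := ((by positivity : 0 < 1 + s * γ).trans_le (hθs j)).ne'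
    rw [mul_diagonal, add_apply, diagonal_mul, smul_apply, smul_eq_mul, ← hX,
      sylvester_diagonal_apply]
    field_simp
    ring
  rw [le_div_iff₀ hγ, mul_comm]
  exact l2_opNorm_le_of_eq_mul_add_smul_mul hs hγ.le hA hD hfix

end Matrix

/-- with `Λ = diag(λ)` and `Θ = diag(θ)` real diagonal matrices whose
separation `γ := min_j θ_j − max_i λ_i` is positive, the matrix `X` with entries
`X_{ij} = R_{ij}/(θ_j − λ_i)` is the unique solution of `−Λ·X + X·Θ = R`, and
`‖X‖ ≤ ‖R‖/γ`. -/
theorem stmt11 {N M : ℕ} (hM : 0 < M) (hMN : M < N)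
    (lam : Fin M → ℝ) (θ : Fin (N - M) → ℝ)
    (R : Matrix (Fin M) (Fin (N - M)) ℝ)
    (γ : ℝ)
    (hγ : γ = Finset.univ.inf' ⟨⟨0, Nat.sub_pos_of_lt hMN⟩, Finset.mem_univ _⟩ θ -
        Finset.univ.sup' ⟨⟨0, hM⟩, Finset.mem_univ _⟩ lam)
    (hγpos : 0 < γ) :
    (-(Matrix.diagonal lam * Matrix.of fun i j => R i j / (θ j - lam i)) +
      (Matrix.of fun i j => R i j / (θ j - lam i)) * Matrix.diagonal θ = R) ∧
    (∀ Y : Matrix (Fin M) (Fin (N - M)) ℝ,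
      -(Matrix.diagonal lam * Y) + Y * Matrix.diagonal θ = R →
      Y = Matrix.of fun i j => R i j / (θ j - lam i)) ∧
    ‖(Matrix.of fun i j => R i j / (θ j - lam i) :
        Matrix (Fin M) (Fin (N - M)) ℝ)‖ ≤ ‖R‖ / γ := by
  set a := Finset.univ.sup' ⟨⟨0, hM⟩, Finset.mem_univ _⟩ lam
  have hlam : ∀ i, lam i ≤ a := fun i => Finset.le_sup' lam (Finset.mem_univ i)
  have hθ : ∀ j, a + γ ≤ θ j := fun j => by
    have := Finset.inf'_le θ (Finset.mem_univ j)
    linarith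
  have hsep : ∀ i j, θ j - lam i ≠ 0 := fun i j => by
    linarith [hlam i, hθ j]
  have hsolves := (sylvester_diagonal_eq_iff hsep (R := R)).2 rfl
  exact ⟨hsolves, fun Y hY => (sylvester_diagonal_eq_iff hsep).1 hY,
    l2_opNorm_le_of_sylvester_diagonal hγpos hlam hθ hsolves⟩
end

section
/- (Energy stability, conditionally positive definite case.) Let A, K be N×N real symmetric matrices, P an N×M real matrix with A·P = 0, Λ an M×M real matrix, B an M×N real matrix, and set M_X = K·A + P·Λ·B. Then M_Xᵀ·A + A·M_X = 2·A·K·A. Consequently, if in addition K is negative semidefinite and u : ℝ → ℝᴺ is differentiable with u′(t) = M_X·u(t) for all t, then the function t ↦ u(t)ᵀ·A·u(t) is nonincreasing. -/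
open Matrix

/-! Since `A * P = 0` and `A`, `K` are symmetric, the term `P * Λ * B` drops out of the Lyapunov
form `M_Xᵀ * A + A * M_X`, which becomes `2 • (Aᵀ * K * A)`. Along a solution the energy
`uᵀ A u` then has derivative `2 (A u)ᵀ K (A u) ≤ 0`. -/

section Calculus

variable {𝕜 ι : Type*} [NontriviallyNormedField 𝕜] [Fintype ι] {u w : 𝕜 → ι → 𝕜} {u' w' : ι → 𝕜}
  {t : 𝕜}

theorem HasDerivAt.dotProduct (hu : HasDerivAt u u' t) (hw : HasDerivAt w w' t) :
    HasDerivAt (fun s => u s ⬝ᵥ w s) (u' ⬝ᵥ w t + u t ⬝ᵥ w') t := by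
  have := HasDerivAt.fun_sum (u := Finset.univ) fun i _ =>
    (hasDerivAt_pi.1 hu i).fun_mul (hasDerivAt_pi.1 hw i)
  rw [Finset.sum_add_distrib] at this
  exact this

theorem HasDerivAt.mulVec (A : Matrix ι ι 𝕜) (hu : HasDerivAt u u' t) :
    HasDerivAt (fun s => A *ᵥ u s) (A *ᵥ u') t :=
  hasDerivAt_pi.2 fun i => by
    have := (hasDerivAt_const t (A i)).dotProduct hu
    rw [zero_dotProduct, zero_add] at this
    exact this

end Calculus

theorem Matrix.dotProduct_mulVec_transpose_mul_mul {R ι κ : Type*} [CommSemiring R] [Fintype ι]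
    [Fintype κ] (A : Matrix κ ι R) (K : Matrix κ κ R) (x : ι → R) :
    x ⬝ᵥ ((Aᵀ * K * A) *ᵥ x) = (A *ᵥ x) ⬝ᵥ (K *ᵥ (A *ᵥ x)) := by
  rw [← mulVec_mulVec, ← mulVec_mulVec, dotProduct_mulVec, vecMul_transpose]

theorem Matrix.dotProduct_mulVec_transpose_mul_add_mul {R ι : Type*} [CommSemiring R] [Fintype ι]
    (M A : Matrix ι ι R) (x : ι → R) :
    x ⬝ᵥ ((Mᵀ * A + A * M) *ᵥ x) = (M *ᵥ x) ⬝ᵥ (A *ᵥ x) + x ⬝ᵥ (A *ᵥ (M *ᵥ x)) := by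
  rw [add_mulVec, dotProduct_add, ← mulVec_mulVec, ← mulVec_mulVec, dotProduct_mulVec x Mᵀ,
    vecMul_transpose]

theorem antitone_dotProduct_mulVec_of_lyapunov {ι : Type*} [Fintype ι] (A M : Matrix ι ι ℝ)
    (hL : ∀ x, x ⬝ᵥ ((Mᵀ * A + A * M) *ᵥ x) ≤ 0) (u : ℝ → ι → ℝ)
    (hu : ∀ t, HasDerivAt u (M *ᵥ u t) t) :
    Antitone fun t => u t ⬝ᵥ (A *ᵥ u t) := by
  have hderiv (t : ℝ) : HasDerivAt (fun s => u s ⬝ᵥ (A *ᵥ u s))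
      (u t ⬝ᵥ ((Mᵀ * A + A * M) *ᵥ u t)) t := by
    rw [dotProduct_mulVec_transpose_mul_add_mul]
    exact (hu t).dotProduct ((hu t).mulVec A)
  refine antitone_of_deriv_nonpos (fun t => (hderiv t).differentiableAt) fun t => ?_
  rw [(hderiv t).deriv]
  exact hL (u t)

theorem Matrix.transpose_mul_add_mul_eq {R ι κ : Type*} [CommRing R] [Fintype ι] [Fintype κ]
    {A K : Matrix ι ι R} (hA : A.IsSymm) (hK : K.IsSymm) {P : Matrix ι κ R} (hAP : A * P = 0)
    (C : Matrix κ ι R) :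
    (K * A + P * C)ᵀ * A + A * (K * A + P * C) = (2 : R) • (A * K * A) := by
  have hPA : Pᵀ * A = 0 := by rw [← hA.eq, ← transpose_mul, hAP, transpose_zero]
  rw [transpose_add, transpose_mul, transpose_mul, hA, hK, add_mul, mul_add, Matrix.mul_assoc Cᵀ,
    hPA, ← Matrix.mul_assoc A P, hAP]
  simp only [Matrix.mul_zero, Matrix.zero_mul, add_zero, two_smul, Matrix.mul_assoc]

/-- energy stability, conditionally positive definite case: with `A, K`
symmetric, `A·P = 0`, and `M_X = K·A + P·Λ·B`, one has `M_Xᵀ·A + A·M_X = 2·A·K·A`;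
consequently if `K` is negative semidefinite and `u′(t) = M_X·u(t)`, then
`t ↦ u(t)ᵀ·A·u(t)` is nonincreasing. -/
theorem stmt15 {N M : ℕ} (A K : Matrix (Fin N) (Fin N) ℝ)
    (hA : A.IsHermitian) (hK : K.IsHermitian)
    (P : Matrix (Fin N) (Fin M) ℝ) (hAP : A * P = 0)
    (Λ : Matrix (Fin M) (Fin M) ℝ) (B : Matrix (Fin M) (Fin N) ℝ) :
    (K * A + P * Λ * B)ᵀ * A + A * (K * A + P * Λ * B) = (2 : ℝ) • (A * K * A) ∧
    ((∀ x : Fin N → ℝ, x ⬝ᵥ (K *ᵥ x) ≤ 0) →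
      ∀ u : ℝ → (Fin N → ℝ),
        (∀ t : ℝ, HasDerivAt u ((K * A + P * Λ * B) *ᵥ u t) t) →
        Antitone (fun t => u t ⬝ᵥ (A *ᵥ u t))) := by
  have hAsymm : A.IsSymm := hA
  have key : (K * A + P * Λ * B)ᵀ * A + A * (K * A + P * Λ * B) = (2 : ℝ) • (A * K * A) := by
    rw [Matrix.mul_assoc P]
    exact transpose_mul_add_mul_eq hAsymm hK hAP (Λ * B)
  refine ⟨key, fun hKneg u hu => antitone_dotProduct_mulVec_of_lyapunov A _ (fun x => ?_) u hu⟩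
  have hAKA : A * K * A = Aᵀ * K * A := by rw [hAsymm.eq]
  rw [key, hAKA, smul_mulVec, dotProduct_smul, smul_eq_mul, dotProduct_mulVec_transpose_mul_mul]
  exact mul_nonpos_of_nonneg_of_nonpos zero_le_two (hKneg (A *ᵥ x))
end
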